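/- arXiv:2503.13640 — 4 statements merged into one kernel-verified Lean document; each statement's English description precedes it below -/
import Mathlib

section
/- Let M = [[A_k, B],[C, D]] be a block matrix over a commutative domain, where A_k is a k×k block with det_k = det(A_k) ≠ 0 and adjugate A_k*. Then each (i,j) entry of the matrix A = det_k · D − C A_k* B equals the determinant of the (k+1)×(k+1) submatrix of M obtained by bordering A_k with the i-th row of C extended by D_{ij} and the j-th column of B, i.e., each entry of A is a surrounding minor of the block A_k. -/
/-!
Since `A * adjugate A = det A • 1`, right multiplication by `[[1, -(adjugate A * B)], [0, det A • 1]]`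
turns `M = [[A, B], [C, D]]` into the block lower triangular `[[A, 0], [C, det A • D - C * adjugate A * B]]`.
Taking determinants gives `det M * det A ^ n = det A * det (det A • D - C * adjugate A * B)` for a
square block `D` of size `n`. Bordering `A` by one row and one column is the case `n = 1`, where
`det A ≠ 0` can be cancelled in a domain.
-/

open Matrix

namespace Matrix

variable {m n R : Type*} [Fintype m] [DecidableEq m] [Fintype n] [DecidableEq n] [CommRing R]

theorem fromBlocks_mul_fromBlocks_neg_adjugate_mul (A : Matrix m m R) (B : Matrix m n R)
    (C : Matrix n m R) (D : Matrix n n R) :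
    fromBlocks A B C D * fromBlocks 1 (-(A.adjugate * B)) 0 (A.det • 1) =
      fromBlocks A 0 C (A.det • D - C * A.adjugate * B) := by
  rw [fromBlocks_multiply, Matrix.mul_neg, Matrix.mul_neg, ← Matrix.mul_assoc,
    ← Matrix.mul_assoc, mul_adjugate]
  simp only [Matrix.mul_one, Matrix.mul_zero, add_zero, Matrix.mul_smul, Matrix.smul_mul,
    Matrix.one_mul, neg_add_cancel, neg_add_eq_sub]

theorem det_fromBlocks_mul_det_pow (A : Matrix m m R) (B : Matrix m n R)
    (C : Matrix n m R) (D : Matrix n n R) :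
    (fromBlocks A B C D).det * A.det ^ Fintype.card n =
      A.det * (A.det • D - C * A.adjugate * B).det := by
  have h := congrArg det (fromBlocks_mul_fromBlocks_neg_adjugate_mul A B C D)
  rwa [det_mul, det_fromBlocks_zero₂₁, det_fromBlocks_zero₁₂, det_one, det_smul, det_one,
    one_mul, mul_one] at h

end Matrix

/-- each entry of `det(A_k)·D − C·A_k*·B` is a surrounding minor of
the block `A_k` of `M = [[A_k, B],[C, D]]`. -/
theorem surrounding_minors_matrix {k m nn : ℕ} {R : Type*} [CommRing R] [IsDomain R]
    (Ak : Matrix (Fin k) (Fin k) R) (B : Matrix (Fin k) (Fin nn) R)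
    (C : Matrix (Fin m) (Fin k) R) (D : Matrix (Fin m) (Fin nn) R)
    (hA : Ak.det ≠ 0) :
    ∀ (i : Fin m) (j : Fin nn),
      (Ak.det • D - C * Ak.adjugate * B) i j =
        (Matrix.fromBlocks Ak
          (Matrix.of fun p (_ : Fin 1) => B p j)
          (Matrix.of fun (_ : Fin 1) q => C i q)
          (Matrix.of fun (_ : Fin 1) (_ : Fin 1) => D i j)).det := by
  intro i j
  have h := det_fromBlocks_mul_det_pow Ak (of fun p (_ : Fin 1) => B p j)
    (of fun (_ : Fin 1) q => C i q) (of fun (_ : Fin 1) (_ : Fin 1) => D i j)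
  rw [Fintype.card_fin, pow_one, mul_comm, det_unique (n := Fin 1)] at h
  rw [mul_left_cancel₀ hA h]
  simp [Matrix.mul_apply]
end

section
/- If S is a weighted permutation matrix over a field, then S S^+ = E E^T and S^+ S = E^T E, where E = S^{→1} and S^+ is the transpose with inverted nonzero entries. -/
open Matrix

/-- A weighted permutation matrix: at most one nonzero entry in each row and each column. -/
def IsWeightedPerm {n : ℕ} {F : Type*} [Field F] (S : Matrix (Fin n) (Fin n) F) : Prop :=
  (∀ i j k, S i j ≠ 0 → S i k ≠ 0 → j = k) ∧
  (∀ j i k, S i j ≠ 0 → S k j ≠ 0 → i = k)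

/-- The unit mapping `S → S^{→1}`: replace every nonzero entry by `1`. -/
noncomputable def unitMap {n : ℕ} {F : Type*} [Field F] (S : Matrix (Fin n) (Fin n) F) :
    Matrix (Fin n) (Fin n) F :=
  Matrix.of fun i j => letI := Classical.propDecidable (S i j = 0); if S i j = 0 then 0 else 1

/-- The pseudoinverse `S⁺` of a weighted permutation matrix:
transpose and invert each nonzero entry (in a field, `0⁻¹ = 0`). -/
def pinv {n : ℕ} {F : Type*} [Field F] (S : Matrix (Fin n) (Fin n) F) :
    Matrix (Fin n) (Fin n) F :=
  Matrix.of fun i j => (S j i)⁻¹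

/-- `T` is a complement `S̄ = S^{Ext} - S` of `S`: a (0,1)-matrix supported on the
zero rows × zero columns of `S`, such that the combined pattern of `S` and `T`
has exactly one nonzero entry in each row and each column. -/
def IsComplement {n : ℕ} {F : Type*} [Field F] (S T : Matrix (Fin n) (Fin n) F) : Prop :=
  (∀ i j, T i j = 0 ∨ T i j = 1) ∧
  (∀ i j, T i j ≠ 0 → (∀ k, S i k = 0) ∧ (∀ k, S k j = 0)) ∧
  (∀ i, ∃! j, S i j ≠ 0 ∨ T i j ≠ 0) ∧
  (∀ j, ∃! i, S i j ≠ 0 ∨ T i j ≠ 0)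

/-- `S S⁺ = E Eᵀ` and `S⁺ S = Eᵀ E`. -/
theorem mul_pinv_eq_idempotents {n : ℕ} {F : Type*} [Field F]
    (S : Matrix (Fin n) (Fin n) F) (hS : IsWeightedPerm S) :
    S * pinv S = unitMap S * (unitMap S)ᵀ ∧
    pinv S * S = (unitMap S)ᵀ * unitMap S := by
  classical
  obtain ⟨hrow, hcol⟩ := hS
  constructor
  · ext i j
    simp only [mul_apply, pinv, unitMap, transpose_apply, of_apply]
    apply Finset.sum_congr rfl
    intro k _
    by_cases h1 : S i k = 0
    · simp [h1]
    by_cases h2 : S j k = 0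
    · simp [h1, h2]
    · have : i = j := hcol k i j h1 h2
      subst this
      simp [h1, h2, mul_inv_cancel₀ h1]
  · ext i j
    simp only [mul_apply, pinv, unitMap, transpose_apply, of_apply]
    apply Finset.sum_congr rfl
    intro k _
    by_cases h1 : S k i = 0
    · simp [h1]
    by_cases h2 : S k j = 0
    · simp [h1, h2]
    · have : i = j := hrow k i j h1 h2
      subst this
      simp [h1, h2, inv_mul_cancel₀ h1]
end

section
/- Suppose A = L S U where L and U are invertible n×n matrices over a field, S has rank r, Ŝ M = L^{-1} and W Ŝ = U^{-1}, and P = W S M with S = c Ŝ for a nonzero scalar c. If A is invertible then (1/c²) W S M = A^{-1}. -/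
open Matrix

theorem Matrix.mul_mul_mul_mul_eq_one_of_mul_eq_nonsing_inv {m R : Type*} [Fintype m]
    [DecidableEq m] [CommRing R] {L U Shat M W : Matrix m m R}
    (hL : IsUnit L.det) (hU : IsUnit U.det) (hM : Shat * M = L⁻¹) (hW : W * Shat = U⁻¹) :
    L * Shat * U * (W * Shat * M) = 1 := by
  calc L * Shat * U * (W * Shat * M) = L * Shat * (U * (W * Shat)) * M := by
        simp only [Matrix.mul_assoc]
    _ = 1 := by
        rw [hW, mul_nonsing_inv _ hU, Matrix.mul_one, Matrix.mul_assoc, hM, mul_nonsing_inv _ hL]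

theorem inverse_from_LSU_general {n : ℕ} {F : Type*} [Field F]
    (L U S Shat M W A : Matrix (Fin n) (Fin n) F) (c : F)
    (hc : c ≠ 0) (hL : IsUnit L.det) (hU : IsUnit U.det)
    (hS : S = c • Shat)
    (hM : Shat * M = L⁻¹) (hW : W * Shat = U⁻¹)
    (hA : A = L * S * U) :
    (c⁻¹) ^ 2 • (W * S * M) = A⁻¹ := by
  subst hS hA
  refine (inv_eq_right_inv ?_).symm
  calc L * (c • Shat) * U * ((c⁻¹) ^ 2 • (W * (c • Shat) * M))
      = (c * (c⁻¹) ^ 2 * c) • (L * Shat * U * (W * Shat * M)) := by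
        simp only [Matrix.mul_smul, Matrix.smul_mul, smul_smul]
        ring_nf
    _ = 1 := by
        rw [mul_mul_mul_mul_eq_one_of_mul_eq_nonsing_inv hL hU hM hW,
          show c * (c⁻¹) ^ 2 * c = 1 by field_simp, one_smul]

/-- if `A = L S U` is invertible, `Ŝ M = L⁻¹`, `W Ŝ = U⁻¹` and
`S = c Ŝ` with `c ≠ 0`, then `(1/c²) W S M = A⁻¹`. -/
theorem inverse_from_LSU {n : ℕ} {F : Type*} [Field F]
    (L U S Shat M W A : Matrix (Fin n) (Fin n) F) (c : F) (r : ℕ)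
    (hc : c ≠ 0) (hL : IsUnit L.det) (hU : IsUnit U.det)
    (hrank : S.rank = r)
    (hS : S = c • Shat)
    (hM : Shat * M = L⁻¹) (hW : W * Shat = U⁻¹)
    (hA : A = L * S * U) (hAinv : IsUnit A.det) :
    (c⁻¹) ^ 2 • (W * S * M) = A⁻¹ :=
  inverse_from_LSU_general L U S Shat M W A c hc hL hU hS hM hW hA
end

section
/- Let S₁₁ be a weighted permutation matrix over a field, E₁₁ = S₁₁^{→1}, I₁₁ = E₁₁E₁₁^T, J₁₁ = E₁₁^TE₁₁, and Ŝ₁₁ = (1/β)(α S₁₁ + S̄₁₁) for nonzero scalars α, β. Then (1−I₁₁) Ŝ₁₁ = (1/β) S̄₁₁ = Ŝ₁₁ (1−J₁₁), S₁₁^+ (1−I₁₁) = 0, and S₁₁^+ Ŝ₁₁ = (α/β) J₁₁. -/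
open Matrix

/-! `E Eᵀ` and `Eᵀ E` are the diagonal projections onto the nonzero rows, resp. columns, of `S`,
so `1 - I₁₁` and `1 - J₁₁` select the zero rows and zero columns, which is exactly where the
complement `S̄` lives; and `S⁺` undoes each nonzero entry of `S` while annihilating everything
supported on the zero rows of `S`. -/

section

variable {n : ℕ} {F : Type*} [Field F] {S T : Matrix (Fin n) (Fin n) F}

open Classical in
theorem unitMap_apply (S : Matrix (Fin n) (Fin n) F) (i j : Fin n) :
    unitMap S i j = if S i j = 0 then 0 else 1 :=
  rfl

theorem unitMap_transpose (S : Matrix (Fin n) (Fin n) F) : unitMap Sᵀ = (unitMap S)ᵀ :=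
  rfl

namespace IsWeightedPerm

theorem transpose (hS : IsWeightedPerm S) : IsWeightedPerm Sᵀ :=
  ⟨hS.2, hS.1⟩

open Classical in
theorem one_sub_unitMap_mul_transpose (hS : IsWeightedPerm S) :
    1 - unitMap S * (unitMap S)ᵀ = diagonal fun i => if ∀ j, S i j = 0 then 1 else 0 := by
  ext i k
  rw [Matrix.sub_apply, mul_apply, one_apply, diagonal_apply]
  by_cases hi : ∀ j, S i j = 0
  · simp [unitMap_apply, hi]
  obtain ⟨j₀, hj₀⟩ := not_forall.mp hi
  rw [Finset.sum_eq_single j₀, if_neg hi]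
  · have hcol : S k j₀ ≠ 0 ↔ i = k :=
      ⟨fun hk => hS.2 j₀ i k hj₀ hk, fun h => h ▸ hj₀⟩
    by_cases hik : i = k <;> simp_all [unitMap_apply]
  · intro j _ hj
    simp [unitMap_apply, show S i j = 0 from by_contra fun h => hj (hS.1 i j j₀ h hj₀)]
  · simp

open Classical in
theorem one_sub_transpose_mul_unitMap (hS : IsWeightedPerm S) :
    1 - (unitMap S)ᵀ * unitMap S = diagonal fun j => if ∀ i, S i j = 0 then 1 else 0 := by
  have h := hS.transpose.one_sub_unitMap_mul_transpose
  rwa [unitMap_transpose, transpose_transpose] at h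

theorem one_sub_unitMap_mul_transpose_mul_self (hS : IsWeightedPerm S) :
    (1 - unitMap S * (unitMap S)ᵀ) * S = 0 := by
  ext i j
  rw [hS.one_sub_unitMap_mul_transpose, diagonal_mul]
  split_ifs with hi <;> simp [hi]

theorem mul_one_sub_transpose_mul_unitMap_self (hS : IsWeightedPerm S) :
    S * (1 - (unitMap S)ᵀ * unitMap S) = 0 := by
  ext i j
  rw [hS.one_sub_transpose_mul_unitMap, mul_diagonal]
  split_ifs with hj <;> simp [hj]

theorem pinv_mul_one_sub_unitMap_mul_transpose (hS : IsWeightedPerm S) :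
    pinv S * (1 - unitMap S * (unitMap S)ᵀ) = 0 := by
  ext i j
  rw [hS.one_sub_unitMap_mul_transpose, mul_diagonal]
  split_ifs with hj <;> simp [pinv, hj]

theorem pinv_mul_self (hS : IsWeightedPerm S) : pinv S * S = (unitMap S)ᵀ * unitMap S := by
  ext i j
  simp only [mul_apply, pinv, of_apply, transpose_apply]
  refine Finset.sum_congr rfl fun k _ => ?_
  by_cases hki : S k i = 0
  · simp [unitMap_apply, hki]
  by_cases hij : i = j
  · subst hij
    simp [unitMap_apply, hki]
  · have hkj : S k j = 0 := by_contra fun h => hij (hS.1 k i j hki h)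
    simp [unitMap_apply, hki, hkj]

end IsWeightedPerm

namespace IsComplement

theorem one_sub_unitMap_mul_transpose_mul (hT : IsComplement S T) (hS : IsWeightedPerm S) :
    (1 - unitMap S * (unitMap S)ᵀ) * T = T := by
  ext i j
  rw [hS.one_sub_unitMap_mul_transpose, diagonal_mul]
  split_ifs with hi
  · exact one_mul _
  · exact (zero_mul _).trans (by_contra fun h => hi (hT.2.1 i j (Ne.symm h)).1)

theorem mul_one_sub_transpose_mul_unitMap (hT : IsComplement S T) (hS : IsWeightedPerm S) :
    T * (1 - (unitMap S)ᵀ * unitMap S) = T := by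
  ext i j
  rw [hS.one_sub_transpose_mul_unitMap, mul_diagonal]
  split_ifs with hj
  · exact mul_one _
  · exact (mul_zero _).trans (by_contra fun h => hj (hT.2.1 i j (Ne.symm h)).2)

theorem pinv_mul (hT : IsComplement S T) : pinv S * T = 0 := by
  ext i j
  rw [mul_apply, Matrix.zero_apply]
  refine Finset.sum_eq_zero fun k _ => ?_
  by_cases hkj : T k j = 0
  · exact mul_eq_zero_of_right _ hkj
  · simp [pinv, (hT.2.1 k j hkj).1 i]

end IsComplement

end

theorem shat_identities_general {n : ℕ} {F : Type*} [Field F]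
    (S Sbar : Matrix (Fin n) (Fin n) F) (a b : F)
    (hS : IsWeightedPerm S) (hSbar : IsComplement S Sbar) :
    (1 - unitMap S * (unitMap S)ᵀ) * (b⁻¹ • (a • S + Sbar)) = b⁻¹ • Sbar ∧
    (b⁻¹ • (a • S + Sbar)) * (1 - (unitMap S)ᵀ * unitMap S) = b⁻¹ • Sbar ∧
    pinv S * (1 - unitMap S * (unitMap S)ᵀ) = 0 ∧
    pinv S * (b⁻¹ • (a • S + Sbar)) = (a / b) • ((unitMap S)ᵀ * unitMap S) := by
  refine ⟨?_, ?_, hS.pinv_mul_one_sub_unitMap_mul_transpose, ?_⟩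
  · rw [Matrix.mul_smul, Matrix.mul_add, Matrix.mul_smul,
      hS.one_sub_unitMap_mul_transpose_mul_self, hSbar.one_sub_unitMap_mul_transpose_mul hS,
      smul_zero, zero_add]
  · rw [Matrix.smul_mul, Matrix.add_mul, Matrix.smul_mul,
      hS.mul_one_sub_transpose_mul_unitMap_self, hSbar.mul_one_sub_transpose_mul_unitMap hS,
      smul_zero, zero_add]
  · rw [Matrix.mul_smul, Matrix.mul_add, Matrix.mul_smul, hS.pinv_mul_self, hSbar.pinv_mul,
      add_zero, smul_smul, div_eq_inv_mul]

/-- for `Ŝ₁₁ = (1/b)(a S₁₁ + S̄₁₁)`: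
`(1−I₁₁) Ŝ₁₁ = (1/b) S̄₁₁ = Ŝ₁₁ (1−J₁₁)`, `S₁₁⁺ (1−I₁₁) = 0`, `S₁₁⁺ Ŝ₁₁ = (a/b) J₁₁`. -/
theorem shat_identities {n : ℕ} {F : Type*} [Field F]
    (S Sbar : Matrix (Fin n) (Fin n) F) (a b : F) (ha : a ≠ 0) (hb : b ≠ 0)
    (hS : IsWeightedPerm S) (hSbar : IsComplement S Sbar) :
    (1 - unitMap S * (unitMap S)ᵀ) * (b⁻¹ • (a • S + Sbar)) = b⁻¹ • Sbar ∧
    (b⁻¹ • (a • S + Sbar)) * (1 - (unitMap S)ᵀ * unitMap S) = b⁻¹ • Sbar ∧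
    pinv S * (1 - unitMap S * (unitMap S)ᵀ) = 0 ∧
    pinv S * (b⁻¹ • (a • S + Sbar)) = (a / b) • ((unitMap S)ᵀ * unitMap S) :=
  shat_identities_general S Sbar a b hS hSbar
end
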